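/- Let T : H → H be nonexpansive with Fix(T) ≠ ∅. Suppose {αₖ} is nondecreasing with α₁ = 0, 0 ≤ αₖ ≤ α < 1, and there exist λ, σ, δ > 0 with δ > (α²(1+α) + ασ)/(1-α²) and 0 < λ ≤ λₖ ≤ (δ - α[α(1+α) + αδ + σ])/(δ[1 + α(1+α) + αδ + σ]). Define yᵏ = xᵏ + αₖ(xᵏ - xᵏ⁻¹) and xᵏ⁺¹ = (1-λₖ)yᵏ + λₖTyᵏ. Then ∑ₖ ‖xᵏ⁺¹ - xᵏ‖² < ∞ and {xᵏ} converges weakly to a point of Fix(T). -/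

import Mathlib

/-!
For a fixed point `p`, the energy
`‖xₖ₊₁ - p‖² - αₖ₊₁ ‖xₖ - p‖² + (αₖ₊₁ (1 + αₖ₊₁) + αₖ₊₁ δ) ‖xₖ₊₁ - xₖ‖²`
drops by at least `σ ‖xₖ₊₂ - xₖ₊₁‖²` at each step; the upper bound on `λₖ` is exactly what makes
the Krasnoselskii–Mann gain `(1 - λ)/λ ‖xₖ₊₂ - yₖ‖²` pay for the inertial terms. Telescoping gives
the summability of `‖xₖ₊₁ - xₖ‖²` and the boundedness of the iterates, hence
`‖xₖ - T xₖ‖ → 0`. For every fixed point, `φₖ = ‖xₖ - p‖²` satisfies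
`φₖ₊₁ - φₖ ≤ αₖ (φₖ - φₖ₋₁) + αₖ (1 + αₖ) ‖xₖ - xₖ₋₁‖²`, which forces `φ` to converge
(Alvarez–Attouch); demiclosedness of `I - T` puts every weak cluster point in `Fix T`, and
Opial's lemma concludes.
-/

/-- Weak convergence in a Hilbert space. -/
def WeakTendsto {H : Type*} [NormedAddCommGroup H] [InnerProductSpace ℝ H]
    (x : ℕ → H) (p : H) : Prop :=
  ∀ w : H, Filter.Tendsto (fun n => (inner ℝ (x n) w : ℝ)) Filter.atTop (nhds (inner ℝ p w))

open RealInnerProductSpace Filter Finset Topology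

theorem mul_sq_le_mul_sub_mul_sq_add_mul_sq {K ρ a δ u v : ℝ} (ha : 0 ≤ a) (hρ : 0 ≤ ρ)
    (hδ : 0 < δ) (hK : K * (a * ρ + δ) ≤ ρ * δ) :
    K * u ^ 2 ≤ ρ * (u - a * v) ^ 2 + a * δ * v ^ 2 := by
  have hpos : 0 < a * ρ + δ := by positivity
  -- `(aρ + δ) * rhs = a ((aρ + δ) v - ρ u)² + ρ δ u²`
  refine le_of_mul_le_mul_left ?_ hpos
  nlinarith [mul_nonneg ha (sq_nonneg ((a * ρ + δ) * v - ρ * u)),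
    mul_le_mul_of_nonneg_right hK (sq_nonneg u)]

noncomputable def inertialStepBound (abar δ σ : ℝ) : ℝ :=
  (δ - abar * (abar * (1 + abar) + abar * δ + σ)) /
    (δ * (1 + abar * (1 + abar) + abar * δ + σ))

theorem inertialStepBound_spec {abar δ σ t : ℝ} (habar : 0 ≤ abar) (hδ : 0 < δ) (hσ : 0 ≤ σ)
    (ht : 0 < t) (h : t ≤ inertialStepBound abar δ σ) :
    t ≤ 1 ∧ (abar * (1 + abar) + abar * δ + σ) * (abar * ((1 - t) / t) + δ)
      ≤ (1 - t) / t * δ := by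
  set A := abar * (1 + abar) + abar * δ + σ
  have hA : 0 ≤ A := by positivity
  have h' : t * (δ * (1 + A)) ≤ δ - abar * A := by
    rw [inertialStepBound, le_div_iff₀ (by positivity)] at h
    linarith
  have ht1 : t ≤ 1 := by nlinarith [mul_nonneg habar hA, mul_nonneg ht.le (mul_nonneg hδ.le hA)]
  refine ⟨ht1, le_of_mul_le_mul_left ?_ ht⟩
  have e₁ : t * (A * (abar * ((1 - t) / t) + δ)) = A * abar * (1 - t) + A * δ * t := by
    field_simp
  have e₂ : t * ((1 - t) / t * δ) = (1 - t) * δ := by field_simp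
  rw [e₁, e₂]
  nlinarith [mul_nonneg (mul_nonneg hA habar) ht.le]

section RealSequences

theorem le_max_of_succ_le_mul_add {u : ℕ → ℝ} {a b : ℝ} (ha₀ : 0 ≤ a) (ha : a < 1)
    (h : ∀ k, u (k + 1) ≤ a * u k + b) (k : ℕ) : u k ≤ max (u 0) (b / (1 - a)) := by
  induction k with
  | zero => exact le_max_left _ _
  | succ k ih =>
    have hb : b ≤ (1 - a) * max (u 0) (b / (1 - a)) := by
      rw [← div_le_iff₀' (by linarith)]
      exact le_max_right _ _
    nlinarith [h k, mul_le_mul_of_nonneg_left ih ha₀]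

theorem summable_of_le_sub_succ {f g : ℕ → ℝ} {m : ℝ} (hf : ∀ k, 0 ≤ f k)
    (h : ∀ k, f k ≤ g k - g (k + 1)) (hg : ∀ k, m ≤ g k) : Summable f :=
  summable_of_sum_range_le hf fun n => calc
    ∑ k ∈ range n, f k ≤ ∑ k ∈ range n, (g k - g (k + 1)) := sum_le_sum fun k _ => h k
    _ = g 0 - g n := sum_range_sub' g n
    _ ≤ g 0 - m := by linarith [hg n]

theorem summable_of_succ_le_mul_add {θ d : ℕ → ℝ} {a : ℝ} (ha : a < 1)
    (hθ : ∀ k, 0 ≤ θ k) (hd₀ : ∀ k, 0 ≤ d k) (hd : Summable d)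
    (h : ∀ k, θ (k + 1) ≤ a * θ k + d k) : Summable θ := by
  refine summable_of_sum_range_le hθ (c := (θ 0 + ∑' k, d k) / (1 - a)) fun n => ?_
  have hsucc : ∑ k ∈ range (n + 1), θ k ≤ θ 0 + a * ∑ k ∈ range n, θ k + ∑' k, d k := by
    have hstep := sum_le_sum fun k (_ : k ∈ range n) => h k
    rw [sum_add_distrib, ← mul_sum] at hstep
    rw [sum_range_succ']
    linarith [hd.sum_le_tsum (range n) fun k _ => hd₀ k]
  have hmono : ∑ k ∈ range n, θ k ≤ ∑ k ∈ range (n + 1), θ k := by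
    rw [sum_range_succ]
    linarith [hθ n]
  rw [le_div_iff₀ (by linarith)]
  nlinarith

theorem exists_tendsto_of_succ_le_add {φ θ : ℕ → ℝ} {m : ℝ} (hφ : ∀ k, m ≤ φ k)
    (hθ₀ : ∀ k, 0 ≤ θ k) (hθ : Summable θ) (h : ∀ k, φ (k + 1) ≤ φ k + θ k) :
    ∃ L, Tendsto φ atTop (𝓝 L) := by
  set ψ := fun n => φ n - ∑ k ∈ range n, θ k with hψ
  have hanti : Antitone ψ := antitone_nat_of_succ_le fun n => by
    simp only [hψ, sum_range_succ]
    linarith [h n]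
  have hbdd : BddBelow (Set.range ψ) := by
    refine ⟨m - ∑' k, θ k, ?_⟩
    rintro _ ⟨n, rfl⟩
    linarith [hφ n, hθ.sum_le_tsum (range n) fun k _ => hθ₀ k]
  exact ⟨_, ((tendsto_atTop_ciInf hanti hbdd).add hθ.hasSum.tendsto_sum_nat).congr
    fun n => sub_add_cancel _ _⟩

theorem exists_tendsto_of_inertial_fejer {φ a d : ℕ → ℝ} {abar : ℝ} (hφ : ∀ k, 0 ≤ φ k)
    (ha : ∀ k, 0 ≤ a k ∧ a k ≤ abar) (habar : abar < 1) (hd₀ : ∀ k, 0 ≤ d k)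
    (hd : Summable d) (h : ∀ k, φ (k + 2) - φ (k + 1) ≤ a k * (φ (k + 1) - φ k) + d k) :
    ∃ L, Tendsto φ atTop (𝓝 L) := by
  set θ := fun k => max (φ (k + 1) - φ k) 0 with hθ_def
  have hθ₀ : ∀ k, 0 ≤ θ k := fun k => le_max_right _ _
  have habar₀ : 0 ≤ abar := (ha 0).1.trans (ha 0).2
  have hθ : ∀ k, θ (k + 1) ≤ abar * θ k + d k := fun k => by
    refine max_le ((h k).trans ?_) (by linarith [mul_nonneg habar₀ (hθ₀ k), hd₀ k])
    have := mul_le_mul (le_max_left (φ (k + 1) - φ k) 0) (ha k).2 (ha k).1 (hθ₀ k)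
    linarith [mul_comm (a k) (φ (k + 1) - φ k), mul_comm abar (θ k)]
  exact exists_tendsto_of_succ_le_add hφ hθ₀
    (summable_of_succ_le_mul_add habar hθ₀ hd₀ hd hθ)
    fun k => by linarith [le_max_left (φ (k + 1) - φ k) 0]

theorem summable_and_bdd_of_energy_descent {φ μ d : ℕ → ℝ} {a σ : ℝ} (ha₀ : 0 ≤ a)
    (ha : a < 1) (hσ : 0 < σ) (hφ : ∀ k, 0 ≤ φ k) (hd : ∀ k, 0 ≤ d k)
    (hdescent : ∀ k, μ (k + 1) + σ * d (k + 1) ≤ μ k) (hlow : ∀ k, φ (k + 1) - a * φ k ≤ μ k) :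
    Summable d ∧ ∃ C, ∀ k, φ k ≤ C := by
  have hμ : Antitone μ := antitone_nat_of_succ_le fun k => by
    nlinarith [hdescent k, hd (k + 1)]
  have hbdd := le_max_of_succ_le_mul_add (u := φ) ha₀ ha (b := μ 0) fun k => by
    linarith [hlow k, hμ (Nat.zero_le k)]
  refine ⟨?_, _, hbdd⟩
  have hshift : Summable fun k => σ * d (k + 1) :=
    summable_of_le_sub_succ (g := μ) (m := -(a * max (φ 0) (μ 0 / (1 - a))))
      (fun k => mul_nonneg hσ.le (hd _)) (fun k => by linarith [hdescent k])
      fun k => by nlinarith [hlow k, mul_le_mul_of_nonneg_left (hbdd k) ha₀, hφ (k + 1)]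
  exact (summable_nat_add_iff 1).1 ((summable_mul_left_iff hσ.ne').1 hshift)

end RealSequences

section InertialStep

variable {H : Type*} [NormedAddCommGroup H] [InnerProductSpace ℝ H]

theorem norm_one_sub_smul_add_smul_sq (u v : H) (t : ℝ) :
    ‖(1 - t) • u + t • v‖ ^ 2
      = (1 - t) * ‖u‖ ^ 2 + t * ‖v‖ ^ 2 - t * (1 - t) * ‖u - v‖ ^ 2 := by
  simp only [← real_inner_self_eq_norm_sq, inner_add_left, inner_add_right, inner_sub_left,
    inner_sub_right, real_inner_smul_left, real_inner_smul_right, real_inner_comm v u]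
  ring

theorem norm_add_smul_sub_sub_sq (x₀ x₁ p : H) (a : ℝ) :
    ‖x₁ + a • (x₁ - x₀) - p‖ ^ 2
      = (1 + a) * ‖x₁ - p‖ ^ 2 - a * ‖x₀ - p‖ ^ 2 + a * (1 + a) * ‖x₁ - x₀‖ ^ 2 := by
  have h : x₁ + a • (x₁ - x₀) - p = (1 - -a) • (x₁ - p) + (-a) • (x₀ - p) := by module
  rw [h, norm_one_sub_smul_add_smul_sq, sub_sub_sub_cancel_right]
  ring

theorem sq_norm_sub_mul_norm_le {u v : H} {a : ℝ} (ha : 0 ≤ a) :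
    (‖u‖ - a * ‖v‖) ^ 2 ≤ ‖u - a • v‖ ^ 2 := by
  have h := abs_norm_sub_norm_le u (a • v)
  rw [norm_smul, Real.norm_of_nonneg ha] at h
  exact sq_le_sq' (abs_le.1 h).1 (abs_le.1 h).2

variable {T : H → H}

theorem norm_km_step_sub_sq_add_le (hT : ∀ u v, ‖T u - T v‖ ≤ ‖u - v‖) {p : H} (hp : T p = p)
    (y : H) {t : ℝ} (ht : 0 < t) :
    ‖(1 - t) • y + t • T y - p‖ ^ 2 + (1 - t) / t * ‖(1 - t) • y + t • T y - y‖ ^ 2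
      ≤ ‖y - p‖ ^ 2 := by
  have hTy : ‖T y - p‖ ^ 2 ≤ ‖y - p‖ ^ 2 := by
    have := hT y p
    rw [hp] at this
    gcongr
  have hzp : (1 - t) • y + t • T y - p = (1 - t) • (y - p) + t • (T y - p) := by module
  have hzy : (1 - t) • y + t • T y - y = t • (T y - y) := by module
  rw [hzp, hzy, norm_one_sub_smul_add_smul_sq, sub_sub_sub_cancel_right, norm_smul,
    Real.norm_of_nonneg ht.le, norm_sub_rev (T y) y]
  field_simp
  nlinarith [mul_le_mul_of_nonneg_left hTy ht.le]

variable {x₀ x₁ y x₂ : H} {a t : ℝ}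

theorem norm_inertial_km_step_sub_sq_add_le (hT : ∀ u v, ‖T u - T v‖ ≤ ‖u - v‖) {p : H}
    (hp : T p = p) (hy : y = x₁ + a • (x₁ - x₀)) (hx₂ : x₂ = (1 - t) • y + t • T y)
    (ht : 0 < t) :
    ‖x₂ - p‖ ^ 2 + (1 - t) / t * ‖x₂ - y‖ ^ 2
      ≤ (1 + a) * ‖x₁ - p‖ ^ 2 - a * ‖x₀ - p‖ ^ 2 + a * (1 + a) * ‖x₁ - x₀‖ ^ 2 := by
  subst hy hx₂
  rw [← norm_add_smul_sub_sub_sq]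
  exact norm_km_step_sub_sq_add_le hT hp _ ht

def inertialEnergy (p : H) (δ a : ℝ) (x₀ x₁ : H) : ℝ :=
  ‖x₁ - p‖ ^ 2 - a * ‖x₀ - p‖ ^ 2 + (a * (1 + a) + a * δ) * ‖x₁ - x₀‖ ^ 2

theorem inertialEnergy_step_le (hT : ∀ u v, ‖T u - T v‖ ≤ ‖u - v‖) {p : H} (hp : T p = p)
    {a' abar δ σ : ℝ} (hy : y = x₁ + a • (x₁ - x₀)) (hx₂ : x₂ = (1 - t) • y + t • T y)
    (ha : 0 ≤ a) (haa' : a ≤ a') (ha' : a' ≤ abar) (hδ : 0 < δ) (hσ : 0 ≤ σ) (ht : 0 < t)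
    (ht_le : t ≤ inertialStepBound abar δ σ) :
    inertialEnergy p δ a' x₁ x₂ + σ * ‖x₂ - x₁‖ ^ 2 ≤ inertialEnergy p δ a x₀ x₁ := by
  obtain ⟨ht1, hbound⟩ := inertialStepBound_spec (ha.trans (haa'.trans ha')) hδ hσ ht ht_le
  set ρ := (1 - t) / t
  have hρ : 0 ≤ ρ := div_nonneg (by linarith) ht.le
  have hK : (a' * (1 + a') + a' * δ + σ) * (a * ρ + δ) ≤ ρ * δ := by
    have ha'0 : 0 ≤ a' := ha.trans haa'
    have habar0 : 0 ≤ abar := ha'0.trans ha'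
    refine le_trans (mul_le_mul ?_ ?_ (by positivity) (by positivity)) hbound
    · have : a' * (1 + a') ≤ abar * (1 + abar) := by nlinarith
      nlinarith
    · nlinarith
  have hfejer := norm_inertial_km_step_sub_sq_add_le hT hp hy hx₂ ht
  have hx₂y : x₂ - y = (x₂ - x₁) - a • (x₁ - x₀) := by rw [hy]; abel
  rw [hx₂y] at hfejer
  have hcs := sq_norm_sub_mul_norm_le (u := x₂ - x₁) (v := x₁ - x₀) ha
  have hyoung := mul_sq_le_mul_sub_mul_sq_add_mul_sq (u := ‖x₂ - x₁‖) (v := ‖x₁ - x₀‖) ha hρ hδ hK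
  have hmono : a * ‖x₁ - p‖ ^ 2 ≤ a' * ‖x₁ - p‖ ^ 2 := by gcongr
  unfold inertialEnergy
  nlinarith [mul_le_mul_of_nonneg_left hcs hρ]

theorem norm_sub_apply_le_of_inertial_km_step (hT : ∀ u v, ‖T u - T v‖ ≤ ‖u - v‖)
    (hy : y = x₁ + a • (x₁ - x₀)) (hx₂ : x₂ = (1 - t) • y + t • T y) (ha : 0 ≤ a)
    (ht : 0 < t) :
    ‖x₁ - T x₁‖ ≤ 2 * (a * ‖x₁ - x₀‖) + (‖x₂ - x₁‖ + a * ‖x₁ - x₀‖) / t := by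
  have hyx : ‖y - x₁‖ = a * ‖x₁ - x₀‖ := by
    rw [hy, add_sub_cancel_left, norm_smul, Real.norm_of_nonneg ha]
  have hx₂y : ‖x₂ - y‖ = t * ‖y - T y‖ := by
    rw [hx₂, show (1 - t) • y + t • T y - y = t • (T y - y) by module, norm_smul,
      Real.norm_of_nonneg ht.le, norm_sub_rev]
  have hresidual : ‖y - T y‖ ≤ (‖x₂ - x₁‖ + a * ‖x₁ - x₀‖) / t := by
    rw [le_div_iff₀ ht, mul_comm, ← hx₂y, ← hyx, norm_sub_rev y]
    exact norm_sub_le_norm_sub_add_norm_sub _ _ _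
  have h₁ := norm_sub_le_norm_sub_add_norm_sub x₁ y (T x₁)
  have h₂ := norm_sub_le_norm_sub_add_norm_sub y (T y) (T x₁)
  rw [norm_sub_rev x₁ y] at h₁
  linarith [hT y x₁]

end InertialStep

section Opial

variable {H : Type*} [NormedAddCommGroup H] [InnerProductSpace ℝ H]

/-- The Riesz embedding into the weak-* dual; it induces the weak topology on `H`, so weak
cluster points of `x` are cluster points of `innerWeakDual ∘ x`. -/
noncomputable def innerWeakDual (v : H) : WeakDual ℝ H :=
  StrongDual.toWeakDual (innerSL ℝ v)

theorem innerWeakDual_apply (v w : H) : innerWeakDual v w = ⟪v, w⟫ := rfl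

theorem MapClusterPt.inner_of_innerWeakDual {F : Filter ℕ} {x : ℕ → H} {z : H}
    (hz : MapClusterPt (innerWeakDual z) F (innerWeakDual ∘ x)) (w : H) :
    MapClusterPt ⟪z, w⟫ F (fun k => ⟪x k, w⟫) :=
  hz.tendsto_comp ((WeakDual.eval_continuous w).tendsto _)

theorem weakTendsto_of_tendsto_innerWeakDual {x : ℕ → H} {p : H}
    (h : Tendsto (innerWeakDual ∘ x) atTop (𝓝 (innerWeakDual p))) : WeakTendsto x p :=
  fun w => ((WeakDual.eval_continuous w).tendsto _).comp h

theorem innerWeakDual_surjective [CompleteSpace H] :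
    Function.Surjective (innerWeakDual : H → WeakDual ℝ H) := fun a =>
  ⟨(InnerProductSpace.toDual ℝ H).symm (WeakDual.toStrongDual a), by
    refine DFunLike.ext _ _ fun w => ?_
    rw [innerWeakDual_apply, ← InnerProductSpace.toDual_apply_apply,
      LinearIsometryEquiv.apply_symm_apply]
    rfl⟩

theorem innerWeakDual_mem_closedBall {v : H} {R : ℝ} (hv : ‖v‖ ≤ R) :
    innerWeakDual v ∈ WeakDual.toStrongDual ⁻¹' Metric.closedBall (0 : StrongDual ℝ H) R := by
  simpa [innerWeakDual, innerSL_apply_norm] using hv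

theorem MapClusterPt.le_of_le_of_tendsto {F : Filter ℕ} {u v : ℕ → ℝ} {c ℓ : ℝ}
    (hc : MapClusterPt c F u) (huv : ∀ k, u k ≤ v k) (hv : Tendsto v F (𝓝 ℓ)) : c ≤ ℓ := by
  by_contra! hℓc
  have hfreq := hc.frequently (Ioi_mem_nhds (by linarith : (c + ℓ) / 2 < c))
  have hev := hv.eventually (Iio_mem_nhds (by linarith : ℓ < (c + ℓ) / 2))
  obtain ⟨k, hk₁, hk₂⟩ := (hfreq.and_eventually hev).exists
  exact absurd (hk₁.trans ((huv k).trans_lt hk₂)) (lt_irrefl _)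

theorem MapClusterPt.eq_of_tendsto {X : Type*} [TopologicalSpace X] [T2Space X] {F : Filter ℕ}
    {u : ℕ → X} {c ℓ : X} (hc : MapClusterPt c F u) (hu : Tendsto u F (𝓝 ℓ)) : c = ℓ :=
  eq_of_nhds_neBot (ClusterPt.mono hc hu)

/-- Demiclosedness of `I - T` at `0`. -/
theorem apply_eq_of_mapClusterPt_innerWeakDual {T : H → H}
    (hT : ∀ u v, ‖T u - T v‖ ≤ ‖u - v‖) {x : ℕ → H} {R : ℝ} (hR : ∀ k, ‖x k‖ ≤ R)
    (hreg : Tendsto (fun k => ‖x k - T (x k)‖) atTop (𝓝 0)) {z : H}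
    (hz : MapClusterPt (innerWeakDual z) atTop (innerWeakDual ∘ x)) : T z = z := by
  -- `‖v - T z‖² - ‖v - z‖²` is affine in `v`, so its cluster value at `z` is `‖z - T z‖²`
  have hid : ∀ v : H, ‖v - T z‖ ^ 2 - ‖v - z‖ ^ 2 = 2 * ⟪v, z - T z⟫ + (‖T z‖ ^ 2 - ‖z‖ ^ 2) :=
    fun v => by rw [norm_sub_sq_real, norm_sub_sq_real, inner_sub_right]; ring
  have hcl : MapClusterPt (‖z - T z‖ ^ 2) atTop (fun k => ‖x k - T z‖ ^ 2 - ‖x k - z‖ ^ 2) := by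
    have h := (hz.inner_of_innerWeakDual (z - T z)).tendsto_comp
      ((by fun_prop : Continuous fun s : ℝ => 2 * s + (‖T z‖ ^ 2 - ‖z‖ ^ 2)).tendsto _)
    convert h using 1
    · rw [← hid, sub_self, norm_zero]
      ring
    · exact funext fun k => hid (x k)
  have hbound : ∀ k, ‖x k - T z‖ ^ 2 - ‖x k - z‖ ^ 2
      ≤ ‖x k - T (x k)‖ ^ 2 + 2 * ‖x k - T (x k)‖ * (R + ‖z‖) := fun k => by
    have h₁ : ‖x k - T z‖ ≤ ‖x k - T (x k)‖ + ‖x k - z‖ :=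
      (norm_sub_le_norm_sub_add_norm_sub _ _ _).trans (by gcongr; exact hT _ _)
    have h₂ : ‖x k - z‖ ≤ R + ‖z‖ := (norm_sub_le _ _).trans (by linarith [hR k])
    nlinarith [norm_nonneg (x k - T (x k)), norm_nonneg (x k - T z)]
  have hlim : Tendsto (fun k => ‖x k - T (x k)‖ ^ 2 + 2 * ‖x k - T (x k)‖ * (R + ‖z‖)) atTop
      (𝓝 0) := by
    simpa using (hreg.pow 2).add ((hreg.const_mul 2).mul_const (R + ‖z‖))
  have hsq : ‖z - T z‖ ^ 2 ≤ 0 := hcl.le_of_le_of_tendsto hbound hlim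
  have : z - T z = 0 := norm_eq_zero.1 (pow_eq_zero_iff two_ne_zero |>.1 (le_antisymm hsq
    (sq_nonneg _)))
  exact (sub_eq_zero.1 this).symm

theorem eq_of_mapClusterPt_innerWeakDual {x : ℕ → H} {z₁ z₂ : H} {L₁ L₂ : ℝ}
    (hz₁ : MapClusterPt (innerWeakDual z₁) atTop (innerWeakDual ∘ x))
    (hz₂ : MapClusterPt (innerWeakDual z₂) atTop (innerWeakDual ∘ x))
    (h₁ : Tendsto (fun k => ‖x k - z₁‖ ^ 2) atTop (𝓝 L₁))
    (h₂ : Tendsto (fun k => ‖x k - z₂‖ ^ 2) atTop (𝓝 L₂)) : z₁ = z₂ := by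
  have hpolar : ∀ v : H,
      ⟪v, z₁ - z₂⟫ = (‖v - z₂‖ ^ 2 - ‖v - z₁‖ ^ 2 - ‖z₂‖ ^ 2 + ‖z₁‖ ^ 2) / 2 :=
    fun v => by rw [inner_sub_right, norm_sub_sq_real v z₂, norm_sub_sq_real v z₁]; ring
  have hlim : Tendsto (fun k => ⟪x k, z₁ - z₂⟫) atTop
      (𝓝 ((L₂ - L₁ - ‖z₂‖ ^ 2 + ‖z₁‖ ^ 2) / 2)) :=
    ((((h₂.sub h₁).sub_const _).add_const _).div_const 2).congr fun k => (hpolar (x k)).symm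
  have e₁ := (hz₁.inner_of_innerWeakDual (z₁ - z₂)).eq_of_tendsto hlim
  have e₂ := (hz₂.inner_of_innerWeakDual (z₁ - z₂)).eq_of_tendsto hlim
  have : ⟪z₁ - z₂, z₁ - z₂⟫ = 0 := by rw [inner_sub_left, e₁, e₂, sub_self]
  exact sub_eq_zero.1 (inner_self_eq_zero.1 this)

/-- Opial's lemma. -/
theorem exists_weakTendsto_of_opial [CompleteSpace H] {x : ℕ → H} {C : Set H} {R : ℝ}
    (hR : ∀ k, ‖x k‖ ≤ R)
    (hconv : ∀ p ∈ C, ∃ L, Tendsto (fun k => ‖x k - p‖ ^ 2) atTop (𝓝 L))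
    (hclust : ∀ z, MapClusterPt (innerWeakDual z) atTop (innerWeakDual ∘ x) → z ∈ C) :
    ∃ p ∈ C, WeakTendsto x p := by
  have hK := WeakDual.isCompact_closedBall (𝕜 := ℝ) (E := H) 0 R
  have hxK : ∀ᶠ k in atTop, innerWeakDual (x k) ∈ _ :=
    Eventually.of_forall fun k => innerWeakDual_mem_closedBall (hR k)
  obtain ⟨a, -, ha⟩ := hK.exists_mapClusterPt (le_principal_iff.2 hxK)
  obtain ⟨z, rfl⟩ := innerWeakDual_surjective a
  obtain ⟨L, hL⟩ := hconv z (hclust z ha)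
  refine ⟨z, hclust z ha, weakTendsto_of_tendsto_innerWeakDual ?_⟩
  refine hK.tendsto_nhds_of_unique_mapClusterPt hxK fun a' _ ha' => ?_
  obtain ⟨z', rfl⟩ := innerWeakDual_surjective a'
  obtain ⟨L', hL'⟩ := hconv z' (hclust z' ha')
  rw [eq_of_mapClusterPt_innerWeakDual ha' ha hL' hL]

end Opial

section InertialKM

variable {H : Type*} [NormedAddCommGroup H] [InnerProductSpace ℝ H] {T : H → H}
  {α lam : ℕ → ℝ} {x y : ℕ → H} {abar : ℝ}

theorem inertialKM_summable_and_bounded (hT : ∀ u v, ‖T u - T v‖ ≤ ‖u - v‖) {p : H}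
    (hp : T p = p) (hy : ∀ k, y k = x (k + 1) + α (k + 1) • (x (k + 1) - x k))
    (hx : ∀ k, x (k + 2) = (1 - lam (k + 1)) • y k + lam (k + 1) • T (y k))
    (hαmono : ∀ k, α k ≤ α (k + 1)) (hα : ∀ k, 0 ≤ α k ∧ α k ≤ abar) (habar : abar < 1)
    {σ δ : ℝ} (hσ : 0 < σ) (hδ : 0 < δ)
    (hlam : ∀ k, 0 < lam k ∧ lam k ≤ inertialStepBound abar δ σ) :
    Summable (fun k => ‖x (k + 1) - x k‖ ^ 2) ∧ ∃ R, ∀ k, ‖x k‖ ≤ R := by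
  have hdescent : ∀ k, inertialEnergy p δ (α (k + 2)) (x (k + 1)) (x (k + 2))
      + σ * ‖x (k + 2) - x (k + 1)‖ ^ 2 ≤ inertialEnergy p δ (α (k + 1)) (x k) (x (k + 1)) :=
    fun k => inertialEnergy_step_le hT hp (hy k) (hx k) (hα _).1 (hαmono _) (hα _).2 hδ hσ.le
      (hlam _).1 (hlam _).2
  have hlow : ∀ k, ‖x (k + 1) - p‖ ^ 2 - abar * ‖x k - p‖ ^ 2
      ≤ inertialEnergy p δ (α (k + 1)) (x k) (x (k + 1)) := fun k => by
    have hcoef : 0 ≤ α (k + 1) * (1 + α (k + 1)) + α (k + 1) * δ := by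
      have := (hα (k + 1)).1
      positivity
    have := mul_le_mul_of_nonneg_right (hα (k + 1)).2 (sq_nonneg ‖x k - p‖)
    unfold inertialEnergy
    nlinarith [mul_nonneg hcoef (sq_nonneg ‖x (k + 1) - x k‖)]
  obtain ⟨hsum, C, hC⟩ := summable_and_bdd_of_energy_descent ((hα 0).1.trans (hα 0).2) habar hσ
    (fun k => sq_nonneg ‖x k - p‖) (fun k => sq_nonneg ‖x (k + 1) - x k‖) hdescent hlow
  refine ⟨hsum, √C + ‖p‖, fun k => ?_⟩
  have hdist : ‖x k - p‖ ≤ √C := by simpa using Real.abs_le_sqrt (hC k)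
  calc ‖x k‖ ≤ ‖x k - p‖ + ‖p‖ := norm_le_norm_sub_add _ _
    _ ≤ √C + ‖p‖ := by gcongr

theorem inertialKM_tendsto_norm_sub_apply (hT : ∀ u v, ‖T u - T v‖ ≤ ‖u - v‖)
    (hy : ∀ k, y k = x (k + 1) + α (k + 1) • (x (k + 1) - x k))
    (hx : ∀ k, x (k + 2) = (1 - lam (k + 1)) • y k + lam (k + 1) • T (y k))
    (hα : ∀ k, 0 ≤ α k ∧ α k ≤ abar) {lamlo : ℝ} (hlamlo : 0 < lamlo)
    (hlam : ∀ k, lamlo ≤ lam k) (hsum : Summable (fun k => ‖x (k + 1) - x k‖ ^ 2)) :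
    Tendsto (fun k => ‖x k - T (x k)‖) atTop (𝓝 0) := by
  have hΔ : Tendsto (fun k => ‖x (k + 1) - x k‖) atTop (𝓝 0) := by
    simpa using hsum.tendsto_atTop_zero.sqrt
  have hbound : ∀ k, ‖x (k + 1) - T (x (k + 1))‖
      ≤ 2 * (abar * ‖x (k + 1) - x k‖) + (‖x (k + 2) - x (k + 1)‖ + abar * ‖x (k + 1) - x k‖)
        / lamlo := fun k => by
    have hα' := hα (k + 1)
    have hnum := add_nonneg (norm_nonneg (x (k + 2) - x (k + 1)))
      (mul_nonneg (hα'.1.trans hα'.2) (norm_nonneg (x (k + 1) - x k)))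
    refine (norm_sub_apply_le_of_inertial_km_step hT (hy k) (hx k) hα'.1
      (hlamlo.trans_le (hlam _))).trans ?_
    gcongr
    all_goals first | exact hα'.2 | exact hlam _
  have hlim : Tendsto (fun k => 2 * (abar * ‖x (k + 1) - x k‖)
      + (‖x (k + 2) - x (k + 1)‖ + abar * ‖x (k + 1) - x k‖) / lamlo) atTop (𝓝 0) := by
    simpa using ((hΔ.const_mul abar).const_mul 2).add
      ((((tendsto_add_atTop_iff_nat 1).2 hΔ).add (hΔ.const_mul abar)).div_const lamlo)
  exact (tendsto_add_atTop_iff_nat 1).1 (squeeze_zero (fun k => norm_nonneg _) hbound hlim)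

theorem inertialKM_exists_tendsto_norm_sub_sq (hT : ∀ u v, ‖T u - T v‖ ≤ ‖u - v‖) {p : H}
    (hp : T p = p) (hy : ∀ k, y k = x (k + 1) + α (k + 1) • (x (k + 1) - x k))
    (hx : ∀ k, x (k + 2) = (1 - lam (k + 1)) • y k + lam (k + 1) • T (y k))
    (hα : ∀ k, 0 ≤ α k ∧ α k ≤ abar) (habar : abar < 1) (hlam : ∀ k, 0 < lam k ∧ lam k ≤ 1)
    (hsum : Summable (fun k => ‖x (k + 1) - x k‖ ^ 2)) :
    ∃ L, Tendsto (fun k => ‖x k - p‖ ^ 2) atTop (𝓝 L) := by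
  have hcoef : ∀ k, α k * (1 + α k) ≤ abar * (1 + abar) := fun k => by
    nlinarith [hα k]
  refine exists_tendsto_of_inertial_fejer (fun k => sq_nonneg ‖x k - p‖) (fun k => hα (k + 1))
    habar (d := fun k => α (k + 1) * (1 + α (k + 1)) * ‖x (k + 1) - x k‖ ^ 2)
    (fun k => by have := (hα (k + 1)).1; positivity)
    (Summable.of_nonneg_of_le (fun k => by have := (hα (k + 1)).1; positivity)
      (fun k => mul_le_mul_of_nonneg_right (hcoef _) (sq_nonneg _))
      (hsum.mul_left (abar * (1 + abar)))) fun k => ?_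
  have hstep := norm_inertial_km_step_sub_sq_add_le hT hp (hy k) (hx k) (hlam (k + 1)).1
  have hρ : 0 ≤ (1 - lam (k + 1)) / lam (k + 1) :=
    div_nonneg (by linarith [(hlam (k + 1)).2]) (hlam (k + 1)).1.le
  nlinarith [mul_nonneg hρ (sq_nonneg ‖x (k + 2) - y k‖)]

end InertialKM

/-- `x 0` plays the role of `x⁻¹` and `x 1` of `x⁰`; `α` and `lam` are indexed from `1`. -/
theorem inertial_KM_convergence_Bot_general
    {H : Type*} [NormedAddCommGroup H] [InnerProductSpace ℝ H] [CompleteSpace H]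
    (T : H → H) (hT : ∀ u v, ‖T u - T v‖ ≤ ‖u - v‖)
    (hFix : ∃ p : H, T p = p)
    (α lam : ℕ → ℝ) (abar lamlo σ δ : ℝ)
    (hαmono : ∀ k, α k ≤ α (k + 1))
    (hα : ∀ k, 0 ≤ α k ∧ α k ≤ abar) (habar : abar < 1)
    (hlamlo : 0 < lamlo) (hσ : 0 < σ) (hδ : 0 < δ)
    (hlam : ∀ k, lamlo ≤ lam k ∧
      lam k ≤ (δ - abar * (abar * (1 + abar) + abar * δ + σ)) /
        (δ * (1 + abar * (1 + abar) + abar * δ + σ)))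
    (x y : ℕ → H)
    (hy : ∀ k, y k = x (k + 1) + α (k + 1) • (x (k + 1) - x k))
    (hx : ∀ k, x (k + 2) = (1 - lam (k + 1)) • y k + lam (k + 1) • T (y k)) :
    Summable (fun k => ‖x (k + 1) - x k‖ ^ 2) ∧
    ∃ p : H, T p = p ∧ WeakTendsto x p := by
  obtain ⟨p₀, hp₀⟩ := hFix
  have hlam_pos : ∀ k, 0 < lam k := fun k => hlamlo.trans_le (hlam k).1
  have hlam_le_one : ∀ k, lam k ≤ 1 := fun k =>
    (inertialStepBound_spec ((hα 0).1.trans (hα 0).2) hδ hσ.le (hlam_pos k) (hlam k).2).1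
  obtain ⟨hsum, R, hR⟩ := inertialKM_summable_and_bounded hT hp₀ hy hx hαmono hα habar hσ hδ
    fun k => ⟨hlam_pos k, (hlam k).2⟩
  have hreg := inertialKM_tendsto_norm_sub_apply hT hy hx hα hlamlo (fun k => (hlam k).1) hsum
  obtain ⟨p, hp, hxp⟩ := exists_weakTendsto_of_opial (C := {p | T p = p}) hR
    (fun p hp => inertialKM_exists_tendsto_norm_sub_sq hT hp hy hx hα habar
      (fun k => ⟨hlam_pos k, hlam_le_one k⟩) hsum)
    fun z hz => apply_eq_of_mapClusterPt_innerWeakDual hT hR hreg hz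
  exact ⟨hsum, p, hp, hxp⟩

/-- Boţ et al.'s convergence theorem for the inertial Krasnoselskii–Mann iteration.
Here `x 0` plays the role of `x⁻¹` and `x 1` of `x⁰`; the index of `α, λ` starts at 1. -/
theorem inertial_KM_convergence_Bot
    {H : Type*} [NormedAddCommGroup H] [InnerProductSpace ℝ H] [CompleteSpace H]
    (T : H → H) (hT : ∀ u v, ‖T u - T v‖ ≤ ‖u - v‖)
    (hFix : ∃ p : H, T p = p)
    (α lam : ℕ → ℝ) (abar lamlo σ δ : ℝ)
    (hαmono : ∀ k, α k ≤ α (k + 1)) (hα1 : α 1 = 0)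
    (hα : ∀ k, 0 ≤ α k ∧ α k ≤ abar) (habar : abar < 1)
    (hlamlo : 0 < lamlo) (hσ : 0 < σ) (hδ : 0 < δ)
    (hδbig : δ > (abar ^ 2 * (1 + abar) + abar * σ) / (1 - abar ^ 2))
    (hlam : ∀ k, lamlo ≤ lam k ∧
      lam k ≤ (δ - abar * (abar * (1 + abar) + abar * δ + σ)) /
        (δ * (1 + abar * (1 + abar) + abar * δ + σ)))
    (x y : ℕ → H)
    (hy : ∀ k, y k = x (k + 1) + α (k + 1) • (x (k + 1) - x k))
    (hx : ∀ k, x (k + 2) = (1 - lam (k + 1)) • y k + lam (k + 1) • T (y k)) :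
    Summable (fun k => ‖x (k + 1) - x k‖ ^ 2) ∧
    ∃ p : H, T p = p ∧ WeakTendsto x p :=
  inertial_KM_convergence_Bot_general T hT hFix α lam abar lamlo σ δ hαmono hα habar hlamlo hσ hδ
    hlam x y hy hx
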